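/- For points x¹, x², x³, x⁴ ∈ 𝒳 = (𝕊¹)^m × ℝⁿ, the combined second-order absolute differences are bounded by first-order ones: D₂(x¹,x²,x³) ≤ d_𝒳(x¹,x²) + d_𝒳(x²,x³), and D₁,₁(x¹,x²,x³,x⁴) ≤ d_𝒳(x¹,x²) + d_𝒳(x³,x⁴). -/

import Mathlib

noncomputable section

/-- `(t)_{2π}`: the unique element of `[-π, π)` with `t - (t)_{2π} ∈ 2πℤ`. -/
def wrap (t : ℝ) : ℝ := t - 2 * Real.pi * (⌊(t + Real.pi) / (2 * Real.pi)⌋ : ℤ)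

/-- A point of `𝒳 = (𝕊¹)^m × ℝⁿ`, identified with `[-π,π)^m × ℝⁿ`. -/
abbrev Pt (m n : ℕ) := (Fin m → ℝ) × (Fin n → ℝ)

/-- Distance on `𝒳`. -/
def dX {m n : ℕ} (x y : Pt m n) : ℝ :=
  Real.sqrt ((∑ i, (wrap (x.1 i - y.1 i)) ^ 2) + ∑ i, (x.2 i - y.2 i) ^ 2)

/-- Combined absolute finite difference of `x ∈ 𝒳^d` with respect to the weight `w`. -/
def Dw {m n : ℕ} (d : ℕ) (w : Fin d → ℝ) (x : Fin d → Pt m n) : ℝ :=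
  Real.sqrt
    ((sInf {r : ℝ | ∃ k : Fin m → Fin d → ℤ,
        r = ∑ i, (∑ j, ((x j).1 i + 2 * Real.pi * (k i j : ℝ)) * w j) ^ 2}) +
      ∑ i, (∑ j, (x j).2 i * w j) ^ 2)

/-!
Write `d_𝒳(x, y) = ‖diffVec x y‖` with `diffVec x y ∈ EuclideanSpace ℝ (Fin m ⊕ Fin n)` the vector
of wrapped cyclic and plain linear differences. Since `(t)_{2π}` differs from `t` by an integer
multiple of `2π`, the vectors `diffVec x¹ x² - diffVec x² x³` and `diffVec x³ x⁴ - diffVec x¹ x²`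
are realised by admissible shifts `k` in the infima defining `D₂` and `D₁,₁`; the triangle
inequality for the Euclidean norm then concludes.
-/

open Real

lemma EuclideanSpace.norm_toLp_sumElim {ι κ : Type*} [Fintype ι] [Fintype κ]
    (u : ι → ℝ) (p : κ → ℝ) :
    ‖(WithLp.toLp 2 (Sum.elim u p) : EuclideanSpace ℝ (ι ⊕ κ))‖ =
      √((∑ i, u i ^ 2) + ∑ i, p i ^ 2) := by
  simp [EuclideanSpace.norm_eq, Fintype.sum_sum_type]

def diffVec {m n : ℕ} (x y : Pt m n) : EuclideanSpace ℝ (Fin m ⊕ Fin n) :=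
  WithLp.toLp 2 (Sum.elim (fun i => wrap (x.1 i - y.1 i)) (fun i => x.2 i - y.2 i))

@[simp]
lemma diffVec_inl {m n : ℕ} (x y : Pt m n) (i : Fin m) :
    diffVec x y (.inl i) = wrap (x.1 i - y.1 i) := rfl

@[simp]
lemma diffVec_inr {m n : ℕ} (x y : Pt m n) (i : Fin n) :
    diffVec x y (.inr i) = x.2 i - y.2 i := rfl

lemma dX_eq_norm_diffVec {m n : ℕ} (x y : Pt m n) : dX x y = ‖diffVec x y‖ := by
  rw [diffVec, EuclideanSpace.norm_toLp_sumElim, dX]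

lemma Dw_le_norm {m n d : ℕ} (w : Fin d → ℝ) (x : Fin d → Pt m n) (k : Fin m → Fin d → ℤ)
    (v : EuclideanSpace ℝ (Fin m ⊕ Fin n))
    (hS : ∀ i, v (.inl i) = ∑ j, ((x j).1 i + 2 * π * (k i j : ℝ)) * w j)
    (hR : ∀ i, v (.inr i) = ∑ j, (x j).2 i * w j) :
    Dw d w x ≤ ‖v‖ := by
  have hbdd : BddBelow {r : ℝ | ∃ k : Fin m → Fin d → ℤ,
      r = ∑ i, (∑ j, ((x j).1 i + 2 * π * (k i j : ℝ)) * w j) ^ 2} := by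
    refine ⟨0, ?_⟩
    rintro r ⟨k, rfl⟩
    positivity
  rw [EuclideanSpace.norm_eq, Fintype.sum_sum_type, Dw]
  refine Real.sqrt_le_sqrt (add_le_add ?_ (le_of_eq ?_))
  · exact csInf_le hbdd ⟨k, by simp only [Real.norm_eq_abs, sq_abs, hS]⟩
  · simp only [Real.norm_eq_abs, sq_abs, hR]

lemma Dw_secondDiff_le {m n : ℕ} (x1 x2 x3 : Pt m n) :
    Dw 3 ![(1 : ℝ), -2, 1] ![x1, x2, x3] ≤ dX x1 x2 + dX x2 x3 := by
  rw [dX_eq_norm_diffVec, dX_eq_norm_diffVec]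
  refine (Dw_le_norm _ _ (fun i => ![-⌊(x1.1 i - x2.1 i + π) / (2 * π)⌋, 0,
    ⌊(x2.1 i - x3.1 i + π) / (2 * π)⌋]) (diffVec x1 x2 - diffVec x2 x3) (fun i => ?_)
    (fun i => ?_)).trans (norm_sub_le _ _)
  · simp only [PiLp.sub_apply, diffVec_inl, wrap, Fin.sum_univ_three, Matrix.cons_val]
    push_cast
    ring
  · simp only [PiLp.sub_apply, diffVec_inr, Fin.sum_univ_three, Matrix.cons_val]
    ring

lemma Dw_mixedDiff_le {m n : ℕ} (x1 x2 x3 x4 : Pt m n) :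
    Dw 4 ![(-1 : ℝ), 1, 1, -1] ![x1, x2, x3, x4] ≤ dX x1 x2 + dX x3 x4 := by
  rw [dX_eq_norm_diffVec, dX_eq_norm_diffVec, add_comm]
  refine (Dw_le_norm _ _ (fun i => ![-⌊(x1.1 i - x2.1 i + π) / (2 * π)⌋, 0, 0,
    ⌊(x3.1 i - x4.1 i + π) / (2 * π)⌋]) (diffVec x3 x4 - diffVec x1 x2) (fun i => ?_)
    (fun i => ?_)).trans (norm_sub_le _ _)
  · simp only [PiLp.sub_apply, diffVec_inl, wrap, Fin.sum_univ_four, Matrix.cons_val]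
    push_cast
    ring
  · simp only [PiLp.sub_apply, diffVec_inr, Fin.sum_univ_four, Matrix.cons_val]
    ring

theorem second_order_differences_le_first_order
    (m n : ℕ) (x1 x2 x3 x4 : Pt m n) :
    Dw 3 ![(1 : ℝ), -2, 1] ![x1, x2, x3] ≤ dX x1 x2 + dX x2 x3 ∧
    Dw 4 ![(-1 : ℝ), 1, 1, -1] ![x1, x2, x3, x4] ≤ dX x1 x2 + dX x3 x4 :=
  ⟨Dw_secondDiff_le x1 x2 x3, Dw_mixedDiff_le x1 x2 x3 x4⟩
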